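/- arXiv:1306.6566 — 3 statements merged into one kernel-verified Lean document; each statement's English description precedes it below -/
import Mathlib

section
/- For nonnegative integers j, k, and M, the integral ∫_0^∞ x^j e^{-x} L_M^{(k)}(x) dx equals (j!/M!) · (k - j)_M, where (a)_M is the Pochhammer symbol. -/
/-!
Expanding `L_M^{(ρ)}` in monomials and integrating termwise with `∫₀^∞ xⁿ e^{-x} dx = n!` turns
the integral into `j!/M!` times `(ρ+1)_M · ₂F₁(-M, j+1; ρ+1; 1)`, and the Chu–Vandermonde
summation evaluates this to `(ρ-j)_M`.
-/

open MeasureTheory Real Finset Polynomial Nat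

/-- The generalized Laguerre polynomial of degree `M` with parameter `ρ`. -/
noncomputable def laguerre (ρ : ℝ) (M : ℕ) (z : ℝ) : ℝ :=
  ((ascPochhammer ℝ M).eval (ρ + 1) / (Nat.factorial M : ℝ)) *
    ∑ j ∈ Finset.range (M + 1),
      ((ascPochhammer ℝ j).eval (-(M : ℝ)) / (ascPochhammer ℝ j).eval (ρ + 1)) *
        z ^ j / (Nat.factorial j : ℝ)

section Pochhammer

variable {R : Type*} [CommRing R]

lemma descPochhammer_eval_neg (r : R) (n : ℕ) :
    (descPochhammer R n).eval (-r) = (-1) ^ n * (ascPochhammer R n).eval r := by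
  rw [← neg_neg r, ascPochhammer_eval_neg_eq_descPochhammer, neg_neg, ← mul_assoc, ← mul_pow,
    neg_one_mul, neg_neg, one_pow, one_mul]

lemma ascPochhammer_eval_mul_eval_add (x : R) (m n : ℕ) :
    (ascPochhammer R m).eval x * (ascPochhammer R n).eval (x + m) =
      (ascPochhammer R (m + n)).eval x := by
  rw [← ascPochhammer_mul, eval_mul, eval_comp, eval_add, eval_X, eval_natCast]

theorem ascPochhammer_eval_sub_eq_sum (b c : R) (M : ℕ) :
    (ascPochhammer R M).eval (c - b) = ∑ i ∈ range (M + 1),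
      (-1) ^ i * M.choose i * (ascPochhammer R i).eval b *
        (ascPochhammer R (M - i)).eval (c + i) := by
  -- the falling-factorial Vandermonde identity at `r = -b`, `s = c + M - 1`
  have h := Ring.descPochhammer_smeval_add (r := -b) (s := c + M - 1) M (Commute.all _ _)
  simp only [← aeval_eq_smeval, aeval_def, eval₂_eq_eval_map, descPochhammer_map,
    Nat.sum_antidiagonal_eq_sum_range_succ_mk] at h
  rw [descPochhammer_eval_eq_ascPochhammer, show -b + (c + M - 1) - M + 1 = c - b by ring] at h
  rw [h]
  refine sum_congr rfl fun i hi => ?_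
  have hiM : i ≤ M := Nat.lt_succ_iff.mp (mem_range.mp hi)
  rw [descPochhammer_eval_neg, descPochhammer_eval_eq_ascPochhammer, Nat.cast_sub hiM,
    show c + M - 1 - (M - i) + 1 = c + i by ring]
  ring

end Pochhammer

/-- Chu–Vandermonde: `(c)_M · ₂F₁(-M, b; c; 1) = (c - b)_M`. -/
theorem ascPochhammer_eval_mul_hypergeometric_sum {K : Type*} [Field K] [CharZero K] (b c : K)
    (M : ℕ) (hc : (ascPochhammer K M).eval c ≠ 0) :
    (ascPochhammer K M).eval c * ∑ i ∈ range (M + 1),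
      (ascPochhammer K i).eval (-(M : K)) * (ascPochhammer K i).eval b /
        ((ascPochhammer K i).eval c * i !) = (ascPochhammer K M).eval (c - b) := by
  rw [ascPochhammer_eval_sub_eq_sum, mul_sum]
  refine sum_congr rfl fun i hi => ?_
  have hiM : i ≤ M := Nat.lt_succ_iff.mp (mem_range.mp hi)
  have hsplit := ascPochhammer_eval_mul_eval_add c i (M - i)
  rw [Nat.add_sub_cancel' hiM] at hsplit
  have hci : (ascPochhammer K i).eval c ≠ 0 := left_ne_zero_of_mul (hsplit ▸ hc)
  have hneg : (ascPochhammer K i).eval (-(M : K)) = (-1) ^ i * (i ! * M.choose i) := by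
    rw [ascPochhammer_eval_neg_eq_descPochhammer, descPochhammer_eval_eq_descFactorial,
      Nat.descFactorial_eq_factorial_mul_choose, Nat.cast_mul]
  have hfac : (i ! : K) ≠ 0 := Nat.cast_ne_zero.mpr i.factorial_ne_zero
  rw [← hsplit, hneg]
  field_simp

lemma integrableOn_pow_mul_exp_neg_Ioi (n : ℕ) :
    IntegrableOn (fun x : ℝ => x ^ n * exp (-x)) (Set.Ioi 0) := by
  refine (GammaIntegral_convergent (s := n + 1) (by positivity)).congr_fun
    (fun x _ => ?_) measurableSet_Ioi
  simp only [add_sub_cancel_right, rpow_natCast, mul_comm]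

lemma integral_pow_mul_exp_neg_Ioi (n : ℕ) :
    ∫ x in Set.Ioi (0 : ℝ), x ^ n * exp (-x) = n ! := by
  rw [← Gamma_nat_eq_factorial, Gamma_eq_integral (by positivity)]
  refine setIntegral_congr_fun measurableSet_Ioi fun x _ => ?_
  simp only [add_sub_cancel_right, rpow_natCast, mul_comm]

theorem integral_pow_mul_exp_neg_mul_laguerre (ρ : ℝ) (j M : ℕ)
    (hρ : (ascPochhammer ℝ M).eval (ρ + 1) ≠ 0) :
    ∫ x in Set.Ioi (0 : ℝ), x ^ j * exp (-x) * laguerre ρ M x =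
      (j ! / M ! : ℝ) * (ascPochhammer ℝ M).eval (ρ - j) := by
  set a : ℕ → ℝ := fun i => (ascPochhammer ℝ M).eval (ρ + 1) / M ! *
    ((ascPochhammer ℝ i).eval (-(M : ℝ)) / (ascPochhammer ℝ i).eval (ρ + 1)) / (i ! : ℝ)
  have hexpand : ∀ x : ℝ, x ^ j * exp (-x) * laguerre ρ M x =
      ∑ i ∈ range (M + 1), a i * (x ^ (j + i) * exp (-x)) := fun x => by
    simp only [laguerre, a, mul_sum, pow_add]
    exact sum_congr rfl fun i _ => by ring
  simp_rw [hexpand]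
  rw [integral_finsetSum _ fun i _ => (integrableOn_pow_mul_exp_neg_Ioi (j + i)).const_mul (a i)]
  simp only [integral_const_mul, integral_pow_mul_exp_neg_Ioi, ← factorial_mul_ascPochhammer]
  rw [show ρ - j = ρ + 1 - (j + 1) by ring,
    ← ascPochhammer_eval_mul_hypergeometric_sum ((j : ℝ) + 1) (ρ + 1) M hρ, mul_sum, mul_sum]
  refine sum_congr rfl fun i _ => ?_
  simp only [a]
  ring

/-- `∫_0^∞ x^j e^{-x} L_M^{(k)}(x) dx = (j!/M!) (k-j)_M`. -/
theorem integral_pow_exp_laguerre (j k M : ℕ) :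
    ∫ x in Set.Ioi (0 : ℝ), x ^ j * Real.exp (-x) * laguerre (k : ℝ) M x =
      ((Nat.factorial j : ℝ) / (Nat.factorial M : ℝ)) *
        (ascPochhammer ℝ M).eval ((k : ℝ) - (j : ℝ)) :=
  integral_pow_mul_exp_neg_mul_laguerre k j M (ascPochhammer_pos M _ (by positivity)).ne'
end

section
/- For every nonnegative integer α, nonnegative integer j, and real μ, ∫_0^∞ {}_0F_1(α+1; μλ) · L_j^{(α)}(λ) · λ^α e^{-λ} dλ = (α!/j!) · (-μ)^j · e^{μ}. -/
/-- The confluent hypergeometric limit function `₀F₁(c; z)`. -/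
noncomputable def hyp0F1 (c z : ℝ) : ℝ :=
  ∑' k : ℕ, z ^ k / ((ascPochhammer ℝ k).eval c * (Nat.factorial k : ℝ))

open MeasureTheory Set Finset Function Nat Real
open scoped fwdDiff

lemma fwdDiff_iter_choose_apply (j k m : ℕ) :
    Δ_[1] ^[j] (fun x ↦ x.choose k : ℕ → ℤ) m = if j ≤ k then (m.choose (k - j) : ℤ) else 0 := by
  split_ifs with hjk
  · obtain ⟨d, rfl⟩ := Nat.exists_eq_add_of_le hjk
    rw [fwdDiff_iter_choose, Nat.add_sub_cancel_left]
  · obtain ⟨d, rfl⟩ := Nat.exists_eq_add_of_lt (not_le.mp hjk)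
    have h := fwdDiff_iter_choose 0 k
    rw [add_zero] at h
    rw [show k + d + 1 = d + 1 + k by ring, iterate_add_apply, iterate_add_apply, h, iterate_one]
    simp [fwdDiff_iter_eq_sum_shift]

lemma neg_one_pow_eq_neg_one_pow_mul_neg_one_pow_sub {R : Type*} [Monoid R] [HasDistribNeg R]
    {i j : ℕ} (h : i ≤ j) : (-1 : R) ^ i = (-1) ^ j * (-1) ^ (j - i) := by
  obtain ⟨d, rfl⟩ := Nat.exists_eq_add_of_le h
  rw [Nat.add_sub_cancel_left, pow_add, mul_assoc, ← pow_add, ← two_mul, pow_mul]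
  simp

lemma sum_neg_one_pow_mul_choose_mul_choose_add (j k m : ℕ) :
    ∑ i ∈ range (j + 1), (-1 : ℤ) ^ i * j.choose i * (m + i).choose k =
      (-1) ^ j * if j ≤ k then (m.choose (k - j) : ℤ) else 0 := by
  rw [← fwdDiff_iter_choose_apply, fwdDiff_iter_eq_sum_shift, mul_sum]
  refine sum_congr rfl fun i hi ↦ ?_
  rw [neg_one_pow_eq_neg_one_pow_mul_neg_one_pow_sub (mem_range_succ_iff.mp hi)]
  simp only [smul_eq_mul, mul_one]
  ring

lemma factorial_add_le (m n : ℕ) : (m + n)! ≤ 2 ^ (m + n) * m ! * n ! := by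
  rw [← Nat.add_choose_mul_factorial_mul_factorial, mul_assoc, mul_assoc]
  exact Nat.mul_le_mul_right _ (Nat.choose_le_two_pow _ _)

lemma factorial_mul_ascPochhammer_eval_add_one {S : Type*} [Semiring S] (a n : ℕ) :
    (a ! : S) * (ascPochhammer S n).eval ((a : S) + 1) = (a + n)! := by
  rw [← Nat.cast_add_one, ← ascPochhammer_eval_cast, ascPochhammer_nat_eq_ascFactorial,
    ← Nat.cast_mul, Nat.factorial_mul_ascFactorial]

lemma integrableOn_pow_mul_exp_neg (n : ℕ) :
    IntegrableOn (fun x : ℝ ↦ x ^ n * exp (-x)) (Ioi 0) := by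
  refine (GammaIntegral_convergent (s := n + 1) (by positivity)).congr_fun (fun x _ ↦ ?_)
    measurableSet_Ioi
  simp only [add_sub_cancel_right, rpow_natCast, mul_comm]

lemma integral_pow_mul_exp_neg (n : ℕ) : ∫ x in Ioi (0 : ℝ), x ^ n * exp (-x) = n ! := by
  rw [← Gamma_nat_eq_factorial, Gamma_eq_integral (by positivity)]
  refine setIntegral_congr_fun measurableSet_Ioi fun x _ ↦ ?_
  rw [add_sub_cancel_right, rpow_natCast, mul_comm]

lemma hasSum_choose_mul_pow_div_factorial (j : ℕ) (x : ℝ) :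
    HasSum (fun k ↦ k.choose j * x ^ k / k !) (x ^ j / j ! * exp x) := by
  rw [← hasSum_nat_add_iff' j, sum_eq_zero fun k hk ↦ by
    rw [Nat.choose_eq_zero_of_lt (mem_range.mp hk)]; simp, sub_zero]
  have h := (NormedSpace.expSeries_div_hasSum_exp x).mul_left (x ^ j / j !)
  rw [← exp_eq_exp_ℝ] at h
  refine h.congr_fun fun m ↦ ?_
  rw [Nat.cast_choose ℝ (Nat.le_add_left j m), Nat.add_sub_cancel, pow_add]
  field_simp

lemma ascPochhammer_eval_natCast_add_one {K : Type*} [DivisionRing K] [CharZero K] (a n : ℕ) :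
    (ascPochhammer K n).eval ((a : K) + 1) = (a + n)! / a ! := by
  rw [eq_div_iff (Nat.cast_ne_zero.mpr a.factorial_ne_zero), ← Nat.cast_comm,
    factorial_mul_ascPochhammer_eval_add_one]

lemma hyp0F1_natCast_add_one (a : ℕ) (z : ℝ) :
    hyp0F1 ((a : ℝ) + 1) z = ∑' k : ℕ, a ! / ((a + k)! * k !) * z ^ k := by
  refine tsum_congr fun k ↦ ?_
  rw [ascPochhammer_eval_natCast_add_one]
  field_simp

noncomputable def laguerreCoeff (α j i : ℕ) : ℝ :=
  (-1) ^ i * j.choose i * (α + j)! / (j ! * (α + i)!)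

lemma laguerre_natCast_eq_sum (α j : ℕ) (x : ℝ) :
    laguerre α j x = ∑ i ∈ range (j + 1), laguerreCoeff α j i * x ^ i := by
  rw [laguerre, mul_sum]
  refine sum_congr rfl fun i _ ↦ ?_
  rw [ascPochhammer_eval_natCast_add_one, ascPochhammer_eval_natCast_add_one,
    ascPochhammer_eval_neg_eq_descPochhammer, descPochhammer_eval_eq_descFactorial,
    Nat.descFactorial_eq_factorial_mul_choose, laguerreCoeff]
  push_cast
  field_simp

lemma sum_laguerreCoeff_mul_factorial (α j k : ℕ) :
    ∑ i ∈ range (j + 1), laguerreCoeff α j i * (α + k + i)! =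
      (-1) ^ j * k.choose j * (α + k)! := by
  have hterm (i : ℕ) : laguerreCoeff α j i * (α + k + i)! =
      (α + j)! * k ! / j ! * ((-1) ^ i * j.choose i * (α + k + i).choose k) := by
    have h := Nat.add_choose_mul_factorial_mul_factorial (α + i) k
    rw [show α + i + k = α + k + i by ring] at h
    rw [laguerreCoeff, ← h]
    push_cast
    field_simp
  have hsum := sum_neg_one_pow_mul_choose_mul_choose_add j k (α + k)
  rw [← Int.cast_inj (α := ℝ)] at hsum
  push_cast at hsum
  rw [sum_congr rfl fun i _ ↦ hterm i, ← mul_sum, hsum]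
  split_ifs with hjk
  · rw [Nat.cast_choose ℝ hjk, Nat.cast_choose ℝ (show k - j ≤ α + k by omega),
      show α + k - (k - j) = α + j by omega]
    field_simp
  · rw [Nat.choose_eq_zero_of_lt (by omega)]
    simp

lemma laguerre_mul_pow_mul_exp_neg_eq_sum (α j n : ℕ) (x : ℝ) :
    laguerre α j x * (x ^ n * exp (-x)) =
      ∑ i ∈ range (j + 1), laguerreCoeff α j i * (x ^ (n + i) * exp (-x)) := by
  rw [laguerre_natCast_eq_sum, sum_mul]
  refine sum_congr rfl fun i _ ↦ ?_
  ring

lemma integrableOn_laguerre_mul_pow_mul_exp_neg (α j n : ℕ) :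
    IntegrableOn (fun x ↦ laguerre α j x * (x ^ n * exp (-x))) (Ioi 0) := by
  simp_rw [laguerre_mul_pow_mul_exp_neg_eq_sum]
  exact integrable_finsetSum _ fun i _ ↦ (integrableOn_pow_mul_exp_neg _).const_mul _

lemma integral_laguerre_mul_pow_mul_exp_neg (α j k : ℕ) :
    ∫ x in Ioi (0 : ℝ), laguerre α j x * (x ^ (α + k) * exp (-x)) =
      (-1) ^ j * k.choose j * (α + k)! := by
  simp_rw [laguerre_mul_pow_mul_exp_neg_eq_sum]
  rw [integral_finsetSum _ fun i _ ↦ (integrableOn_pow_mul_exp_neg _).const_mul _]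
  simp_rw [integral_const_mul, integral_pow_mul_exp_neg]
  exact sum_laguerreCoeff_mul_factorial α j k

lemma exists_integral_norm_laguerre_mul_pow_mul_exp_neg_le (α j : ℕ) :
    ∃ C, ∀ k, ∫ x in Ioi (0 : ℝ), ‖laguerre α j x * (x ^ (α + k) * exp (-x))‖ ≤
      C * 2 ^ k * (α + k)! := by
  refine ⟨∑ i ∈ range (j + 1), |laguerreCoeff α j i| * 2 ^ (α + i) * i !, fun k ↦ ?_⟩
  have hint : IntegrableOn
      (fun x ↦ ∑ i ∈ range (j + 1), |laguerreCoeff α j i| * (x ^ (α + k + i) * exp (-x)))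
      (Ioi 0) :=
    integrable_finsetSum _ fun i _ ↦ (integrableOn_pow_mul_exp_neg _).const_mul _
  have hle : ∀ᵐ x ∂volume.restrict (Ioi (0 : ℝ)),
      ‖laguerre α j x * (x ^ (α + k) * exp (-x))‖ ≤
        ∑ i ∈ range (j + 1), |laguerreCoeff α j i| * (x ^ (α + k + i) * exp (-x)) := by
    filter_upwards [ae_restrict_mem measurableSet_Ioi] with x hx
    rw [laguerre_mul_pow_mul_exp_neg_eq_sum]
    refine (norm_sum_le _ _).trans_eq (sum_congr rfl fun i _ ↦ ?_)
    rw [norm_mul, Real.norm_eq_abs,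
      Real.norm_of_nonneg (mul_nonneg (pow_nonneg hx.le _) (exp_nonneg _))]
  calc ∫ x in Ioi (0 : ℝ), ‖laguerre α j x * (x ^ (α + k) * exp (-x))‖
      ≤ ∫ x in Ioi (0 : ℝ),
          ∑ i ∈ range (j + 1), |laguerreCoeff α j i| * (x ^ (α + k + i) * exp (-x)) :=
        integral_mono_of_nonneg (ae_of_all _ fun _ ↦ norm_nonneg _) hint hle
    _ = ∑ i ∈ range (j + 1), |laguerreCoeff α j i| * (α + k + i)! := by
        rw [integral_finsetSum _ fun i _ ↦ (integrableOn_pow_mul_exp_neg _).const_mul _]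
        simp_rw [integral_const_mul, integral_pow_mul_exp_neg]
    _ ≤ ∑ i ∈ range (j + 1), |laguerreCoeff α j i| * (2 ^ (α + k + i) * (α + k)! * i !) := by
        gcongr
        exact_mod_cast factorial_add_le (α + k) _
    _ = _ := by
        rw [sum_mul, sum_mul]
        refine sum_congr rfl fun i _ ↦ ?_
        ring

lemma summable_integral_norm_hyp0F1_laguerre_terms (α j : ℕ) (μ : ℝ) :
    Summable fun k : ℕ ↦ ∫ x in Ioi (0 : ℝ),
      ‖α ! / ((α + k)! * k !) * μ ^ k * (laguerre α j x * (x ^ (α + k) * exp (-x)))‖ := by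
  obtain ⟨C, hC⟩ := exists_integral_norm_laguerre_mul_pow_mul_exp_neg_le α j
  refine Summable.of_nonneg_of_le (fun k ↦ integral_nonneg fun _ ↦ norm_nonneg _) (fun k ↦ ?_)
    ((summable_pow_div_factorial (2 * |μ|)).mul_left (α ! * C))
  simp_rw [norm_mul _ (laguerre α j _ * _)]
  rw [integral_const_mul]
  calc ‖α ! / ((α + k)! * k !) * μ ^ k‖ *
        ∫ x in Ioi (0 : ℝ), ‖laguerre α j x * (x ^ (α + k) * exp (-x))‖
      ≤ ‖α ! / ((α + k)! * k !) * μ ^ k‖ * (C * 2 ^ k * (α + k)!) :=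
        mul_le_mul_of_nonneg_left (hC k) (norm_nonneg _)
    _ = α ! * C * ((2 * |μ|) ^ k / k !) := by
        rw [norm_mul, norm_pow, Real.norm_eq_abs, Real.norm_eq_abs,
          abs_of_nonneg (by positivity : (0 : ℝ) ≤ α ! / ((α + k)! * k !))]
        field_simp
        ring

/-- `∫_0^∞ ₀F₁(α+1; μλ) L_j^{(α)}(λ) λ^α e^{-λ} dλ = (α!/j!) (-μ)^j e^μ`. -/
theorem integral_hyp0F1_laguerre (α j : ℕ) (μ : ℝ) :
    ∫ lam in Set.Ioi (0 : ℝ),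
        hyp0F1 ((α : ℝ) + 1) (μ * lam) * laguerre (α : ℝ) j lam *
          lam ^ α * Real.exp (-lam) =
      ((Nat.factorial α : ℝ) / (Nat.factorial j : ℝ)) * (-μ) ^ j * Real.exp μ := by
  have hseries (x : ℝ) : hyp0F1 (α + 1) (μ * x) * laguerre α j x * x ^ α * exp (-x) =
      ∑' k : ℕ, α ! / ((α + k)! * k !) * μ ^ k * (laguerre α j x * (x ^ (α + k) * exp (-x))) := by
    rw [hyp0F1_natCast_add_one, ← tsum_mul_right, ← tsum_mul_right, ← tsum_mul_right]
    refine tsum_congr fun k ↦ ?_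
    ring
  have hterm (k : ℕ) : ∫ x in Ioi (0 : ℝ),
      α ! / ((α + k)! * k !) * μ ^ k * (laguerre α j x * (x ^ (α + k) * exp (-x))) =
        (-1) ^ j * α ! * (k.choose j * μ ^ k / k !) := by
    rw [integral_const_mul, integral_laguerre_mul_pow_mul_exp_neg]
    field_simp
  simp_rw [hseries]
  rw [← integral_tsum_of_summable_integral_norm
    (fun k ↦ (integrableOn_laguerre_mul_pow_mul_exp_neg α j _).const_mul _)
    (summable_integral_norm_hyp0F1_laguerre_terms α j μ)]
  simp_rw [hterm]
  rw [((hasSum_choose_mul_pow_div_factorial j μ).mul_left _).tsum_eq, neg_pow]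
  ring
end

section
/- Double-sum rearrangement with {}_1F_1: for nonnegative integers n, i, α with n + i ≥ 2 and reals μ, x, Σ_{l=0}^∞ Σ_{k=0}^∞ μ^{l+k} x^k / (k! (α+1)_{l+k}) · (-l)_{n+i-2}/(1)_{n+i-2} = ((-1)^{n+i} μ^{n+i-2} α! / (n+i+α-2)!) · Σ_{k=0}^∞ (xμ)^k / (k! (n+i+α-1)_k) · {}_1F_1(n+i-1; n+α+i+k-1; μ). -/
/-!
With `N = n + i - 2`, the factor `(-l)_N / N!` equals `(-1)^N * choose l N`, which vanishes for
`l < N`, so the outer sum may be reindexed by `l = N + j`. Writing every Pochhammer symbol at a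
natural argument as a quotient of factorials, both sides become iterated sums of one double
series `doubleSumTerm`, in the orders `j, k` and `k, j` respectively. That series is dominated by
a product of two exponential series, so the order of summation may be exchanged.
-/

/-- Evaluation of the Pochhammer symbol `(x)_m` over `ℝ`. -/
noncomputable def ascEval (m : ℕ) (x : ℝ) : ℝ := (ascPochhammer ℝ m).eval x

/-- The confluent hypergeometric function `₁F₁(a; c; z)` over `ℝ`. -/
noncomputable def oneF1R (a c z : ℝ) : ℝ :=
  ∑' m : ℕ, (ascEval m a / ascEval m c) * z ^ m / (Nat.factorial m : ℝ)

open Nat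

lemma ascEval_natCast_add_one (c m : ℕ) : ascEval m ((c : ℝ) + 1) = ((c + m)! : ℝ) / c ! := by
  have hc : (c ! : ℝ) ≠ 0 := by positivity
  rw [eq_div_iff hc, ← Nat.cast_add_one, ascEval, ← ascPochhammer_eval_cast,
    ascPochhammer_nat_eq_ascFactorial, ← Nat.cast_mul, mul_comm, factorial_mul_ascFactorial]

lemma ascEval_neg_natCast_div_ascEval_one (N l : ℕ) :
    ascEval N (-(l : ℝ)) / ascEval N 1 = (-1) ^ N * (l.choose N : ℝ) := by
  have hN : (N ! : ℝ) ≠ 0 := by positivity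
  rw [ascEval, ascEval, ascPochhammer_eval_neg_eq_descPochhammer,
    descPochhammer_eval_eq_descFactorial, ascPochhammer_eval_one,
    descFactorial_eq_factorial_mul_choose]
  push_cast
  field_simp

lemma factorial_mul_factorial_le_factorial_add_add (a b c : ℕ) : a ! * b ! ≤ (a + b + c)! :=
  (Nat.le_of_dvd (factorial_pos _) (factorial_mul_factorial_dvd_factorial_add a b)).trans
    (factorial_le (le_add_right _ _))

noncomputable def doubleSumTerm (N α : ℕ) (μ x : ℝ) (k j : ℕ) : ℝ :=
  (-1) ^ N * μ ^ N / N ! * ((α ! * (N + j)! : ℝ) / (N + α + k + j)!) *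
    (μ ^ j / j !) * ((x * μ) ^ k / k !)

lemma summable_doubleSumTerm (N α : ℕ) (μ x : ℝ) :
    Summable (Function.uncurry (doubleSumTerm N α μ x)) := by
  have hexp : Summable fun p : ℕ × ℕ =>
      |μ| ^ N / N ! * ((|x| * |μ|) ^ p.1 / p.1 ! * (|μ| ^ p.2 / p.2 !)) :=
    ((Real.summable_pow_div_factorial _).mul_of_nonneg (Real.summable_pow_div_factorial _)
      (fun _ => by positivity) (fun _ => by positivity)).mul_left _
  refine hexp.of_norm_bounded fun ⟨k, j⟩ => ?_
  have hratio : (α ! * (N + j)! : ℝ) / (N + α + k + j)! ≤ 1 := by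
    rw [div_le_one (by positivity)]
    exact_mod_cast (factorial_mul_factorial_le_factorial_add_add α (N + j) k).trans_eq
      (congrArg _ (by ring))
  simp only [Function.uncurry, doubleSumTerm, norm_mul, norm_div, norm_pow, norm_neg, norm_one,
    one_pow, one_mul, Real.norm_eq_abs, Nat.abs_cast]
  calc _ = (α ! * (N + j)! : ℝ) / (N + α + k + j)! *
        (|μ| ^ N / N ! * ((|x| * |μ|) ^ k / k ! * (|μ| ^ j / j !))) := by ring
    _ ≤ _ := mul_le_of_le_one_left (by positivity) hratio

lemma tsum_tsum_pochhammer_eq_tsum_tsum_doubleSumTerm (N α : ℕ) (μ x : ℝ) :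
    (∑' l : ℕ, ∑' k : ℕ,
        μ ^ (l + k) * x ^ k / ((k ! : ℝ) * ascEval (l + k) ((α : ℝ) + 1)) *
          (ascEval N (-(l : ℝ)) / ascEval N 1)) =
      ∑' j : ℕ, ∑' k : ℕ, doubleSumTerm N α μ x k j := by
  simp_rw [ascEval_neg_natCast_div_ascEval_one, ascEval_natCast_add_one]
  rw [← (add_right_injective N).tsum_eq]
  · refine tsum_congr fun j => tsum_congr fun k => ?_
    rw [Nat.cast_add_choose, doubleSumTerm, show α + (N + j + k) = N + α + k + j by ring]
    field_simp
    ring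
  · intro l hl
    refine ⟨l - N, Nat.add_sub_of_le (not_lt.1 fun hlt => hl ?_)⟩
    simp [Nat.choose_eq_zero_of_lt hlt]

lemma mul_tsum_oneF1R_eq_tsum_tsum_doubleSumTerm (N α : ℕ) (μ x : ℝ) :
    ((-1 : ℝ) ^ N * μ ^ N * α ! / (N + α)!) *
        ∑' k : ℕ, (x * μ) ^ k / ((k ! : ℝ) * ascEval k (((N + α : ℕ) : ℝ) + 1)) *
          oneF1R ((N : ℝ) + 1) (((N + α + k : ℕ) : ℝ) + 1) μ =
      ∑' k : ℕ, ∑' j : ℕ, doubleSumTerm N α μ x k j := by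
  simp_rw [oneF1R, ← tsum_mul_left]
  refine tsum_congr fun k => tsum_congr fun j => ?_
  simp only [ascEval_natCast_add_one, doubleSumTerm]
  field_simp

/-- Double-sum rearrangement:
`Σ_l Σ_k μ^{l+k} x^k/(k! (α+1)_{l+k}) (-l)_{n+i-2}/(1)_{n+i-2}
 = ((-1)^{n+i} μ^{n+i-2} α!/(n+i+α-2)!) Σ_k (xμ)^k/(k! (n+i+α-1)_k) ₁F₁(n+i-1; n+α+i+k-1; μ)`. -/
theorem double_sum_rearrangement (n i α : ℕ) (h : 2 ≤ n + i) (μ x : ℝ) :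
    (∑' l : ℕ, ∑' k : ℕ,
        μ ^ (l + k) * x ^ k / ((Nat.factorial k : ℝ) * ascEval (l + k) ((α : ℝ) + 1)) *
          (ascEval (n + i - 2) (-(l : ℝ)) / ascEval (n + i - 2) 1)) =
      ((-1 : ℝ) ^ (n + i) * μ ^ (n + i - 2) * (Nat.factorial α : ℝ) /
          (Nat.factorial (n + i + α - 2) : ℝ)) *
        ∑' k : ℕ,
          (x * μ) ^ k / ((Nat.factorial k : ℝ) * ascEval k ((n : ℝ) + i + α - 1)) *
            oneF1R ((n : ℝ) + i - 1) ((n : ℝ) + α + i + k - 1) μ := by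
  obtain ⟨N, hN⟩ : ∃ N, n + i = N + 2 := ⟨n + i - 2, by omega⟩
  have hNR : (n : ℝ) + i = N + 2 := by exact_mod_cast hN
  have hsign : (-1 : ℝ) ^ (n + i) = (-1) ^ N := by rw [hN, pow_add]; norm_num
  have ha : (n : ℝ) + i - 1 = N + 1 := by linarith
  have hb : (n : ℝ) + i + α - 1 = ((N + α : ℕ) : ℝ) + 1 := by push_cast; linarith
  have hc (k : ℕ) : (n : ℝ) + α + i + k - 1 = ((N + α + k : ℕ) : ℝ) + 1 := by
    push_cast; linarith
  rw [show n + i - 2 = N by omega, show n + i + α - 2 = N + α by omega, hsign, ha, hb]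
  simp_rw [hc]
  rw [tsum_tsum_pochhammer_eq_tsum_tsum_doubleSumTerm, mul_tsum_oneF1R_eq_tsum_tsum_doubleSumTerm]
  exact (summable_doubleSumTerm N α μ x).tsum_comm
end
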